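/- arXiv:2311.07009 — 2 statements merged into one kernel-verified Lean document; each statement's English description precedes it below -/
import Mathlib

section
/- For every positive integer n, there exists a source of size n and a prefix code whose competitive advantage over a Shannon–Fano code for the source is at least 1 − 2^{−n+2}, and whose expected codeword length is at least 1 − 2^{−n+2} less than that of the Shannon–Fano code. -/
/-!
Take probabilities just below the dyadic values `2⁻¹, 2⁻², …, 2⁻⁽ⁿ⁻¹⁾`, and give the remaining
mass, which is below `2 ^ (2 - n)`, to a last symbol. Rounding `log₂ (1 / p)` up then costs the
Shannon–Fano code a full extra bit on each of the first `n - 1` symbols relative to the unary code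
`0, 10, 110, …, 1⋯10, 1⋯1`, while on the last symbol the unary code is no longer. Both the
competitive advantage and the saving in expected length are therefore at least the mass of the first
`n - 1` symbols.
-/

open Real Finset

noncomputable def shannonFanoLength (p : ℝ) : ℤ := ⌈logb 2 (1 / p)⌉

theorem lt_shannonFanoLength_iff {p : ℝ} (hp : 0 < p) (k : ℤ) :
    k < shannonFanoLength p ↔ p < 2 ^ (-k) := by
  rw [shannonFanoLength, Int.lt_ceil, lt_logb_iff_rpow_lt one_lt_two (one_div_pos.2 hp),
    rpow_intCast, lt_one_div (by positivity) hp, zpow_neg, inv_eq_one_div]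

/-- `unaryCode m i` is `1ⁱ0` for `i < m` and `1ᵐ` for `i ≥ m`. -/
def unaryCode : ℕ → ℕ → List Bool
  | 0, _ => []
  | _ + 1, 0 => [false]
  | m + 1, i + 1 => true :: unaryCode m i

theorem length_unaryCode (m i : ℕ) : (unaryCode m i).length = min (i + 1) m := by
  induction m generalizing i with
  | zero => simp [unaryCode]
  | succ m ih => cases i <;> simp [unaryCode, ih]

theorem eq_of_unaryCode_prefix {m i j : ℕ} (hi : i ≤ m) (hj : j ≤ m)
    (h : unaryCode m i <+: unaryCode m j) : i = j := by
  induction m generalizing i j with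
  | zero => omega
  | succ m ih =>
    rcases i with _ | i <;> rcases j with _ | j
    · rfl
    · simp [unaryCode] at h
    · simp [unaryCode] at h
    · simp only [unaryCode, List.cons_prefix_cons, true_and] at h
      exact congrArg (· + 1) (ih (by omega) (by omega) h)

section Advantage

variable {ι : Type*} [Fintype ι] {p : ι → ℝ} {ℓ : ι → ℕ} {L : ι → ℤ} {s : Finset ι}

theorem sum_le_competitive_advantage (hp : ∀ i, 0 ≤ p i) (hle : ∀ i, ℓ i ≤ L i)
    (hs : ∀ i ∈ s, ℓ i < L i) :
    ∑ i ∈ s, p i ≤ ∑ i ∈ univ.filter (fun i => (ℓ i : ℤ) < L i), p i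
      - ∑ i ∈ univ.filter (fun i => L i < ℓ i), p i := by
  have hno_loss : univ.filter (fun i => L i < ℓ i) = ∅ :=
    filter_eq_empty_iff.2 fun i _ => not_lt.2 (hle i)
  rw [hno_loss, sum_empty, sub_zero]
  exact sum_le_sum_of_subset_of_nonneg (fun i hi => mem_filter.2 ⟨mem_univ i, hs i hi⟩)
    fun i _ _ => hp i

theorem sum_le_expected_length_sub (hp : ∀ i, 0 ≤ p i) (hle : ∀ i, ℓ i ≤ L i)
    (hs : ∀ i ∈ s, ℓ i < L i) :
    ∑ i ∈ s, p i ≤ ∑ i, p i * (L i : ℝ) - ∑ i, p i * (ℓ i : ℝ) := by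
  have hgap : ∀ i, 0 ≤ p i * ((L i : ℝ) - ℓ i) := fun i =>
    mul_nonneg (hp i) (sub_nonneg.2 (by exact_mod_cast hle i))
  calc ∑ i ∈ s, p i ≤ ∑ i ∈ s, p i * ((L i : ℝ) - ℓ i) := by
        refine sum_le_sum fun i hi => le_mul_of_one_le_right (hp i) ?_
        rw [le_sub_iff_add_le']
        exact_mod_cast hs i hi
    _ ≤ ∑ i, p i * ((L i : ℝ) - ℓ i) :=
        sum_le_sum_of_subset_of_nonneg (subset_univ s) fun i _ _ => hgap i
    _ = ∑ i, p i * (L i : ℝ) - ∑ i, p i * (ℓ i : ℝ) := by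
        simp only [mul_sub, sum_sub_distrib]

end Advantage

theorem two_zpow_one_sub_natCast (m : ℕ) : (2 : ℝ) ^ (1 - (m : ℤ)) = 2 * 2⁻¹ ^ m := by
  rw [zpow_sub₀ two_ne_zero, zpow_one, zpow_natCast, inv_pow, div_eq_mul_inv]

/-- With `t = 2⁻ᵐ`, the factor `1 - t / 2` keeps each of the first `m` probabilities strictly below
its dyadic value while leaving a remainder `t (3 - t) / 2 < 2 t` for the last symbol. -/
noncomputable def subdyadicSource (m : ℕ) : Fin (m + 1) → ℝ :=
  Fin.snoc (α := fun _ => ℝ) (fun i : Fin m => (1 - 2⁻¹ ^ m / 2) * 2⁻¹ ^ ((i : ℕ) + 1))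
    (2⁻¹ ^ m * (3 - 2⁻¹ ^ m) / 2)

namespace subdyadicSource

theorem sum_eq_one (m : ℕ) : ∑ i, subdyadicSource m i = 1 := by
  have hgeom : ∑ i ∈ range m, (2⁻¹ : ℝ) ^ (i + 1) = 1 - 2⁻¹ ^ m := by
    induction m with
    | zero => simp
    | succ m ih => rw [sum_range_succ, ih]; ring
  rw [Fin.sum_univ_castSucc]
  simp only [subdyadicSource, Fin.snoc_castSucc, Fin.snoc_last]
  rw [← mul_sum, Fin.sum_univ_eq_sum_range (fun i => (2⁻¹ : ℝ) ^ (i + 1)), hgeom]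
  ring

theorem castSucc_lt (m : ℕ) (i : Fin m) :
    subdyadicSource m i.castSucc < 2⁻¹ ^ ((i : ℕ) + 1) := by
  simp only [subdyadicSource, Fin.snoc_castSucc]
  have : (0 : ℝ) < 2⁻¹ ^ m := by positivity
  have : (0 : ℝ) < 2⁻¹ ^ ((i : ℕ) + 1) := by positivity
  nlinarith

theorem last_lt (m : ℕ) : subdyadicSource m (Fin.last m) < 2 * 2⁻¹ ^ m := by
  simp only [subdyadicSource, Fin.snoc_last]
  have : (0 : ℝ) < 2⁻¹ ^ m := by positivity
  nlinarith

theorem pos (m : ℕ) (i : Fin (m + 1)) : 0 < subdyadicSource m i := by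
  have ht : (0 : ℝ) < 2⁻¹ ^ m := by positivity
  have ht_le : (2⁻¹ : ℝ) ^ m ≤ 1 := pow_le_one₀ (by norm_num) (by norm_num)
  induction i using Fin.lastCases with
  | last => simp only [subdyadicSource, Fin.snoc_last]; nlinarith
  | cast i =>
    simp only [subdyadicSource, Fin.snoc_castSucc]
    have : (0 : ℝ) < 2⁻¹ ^ ((i : ℕ) + 1) := by positivity
    nlinarith

theorem length_unaryCode_castSucc_lt (m : ℕ) (i : Fin m) :
    ((unaryCode m i).length : ℤ) < shannonFanoLength (subdyadicSource m i.castSucc) := by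
  rw [length_unaryCode, min_eq_left (by omega), lt_shannonFanoLength_iff (pos m _),
    zpow_neg, Nat.cast_succ, ← Nat.cast_succ, zpow_natCast, ← inv_pow]
  exact castSucc_lt m i

theorem length_unaryCode_le (m : ℕ) (i : Fin (m + 1)) :
    ((unaryCode m i).length : ℤ) ≤ shannonFanoLength (subdyadicSource m i) := by
  induction i using Fin.lastCases with
  | cast i => exact (length_unaryCode_castSucc_lt m i).le
  | last =>
    rw [Fin.val_last, length_unaryCode, min_eq_right (by omega), ← Int.sub_one_lt_iff,
      lt_shannonFanoLength_iff (pos m _), neg_sub, two_zpow_one_sub_natCast]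
    exact last_lt m

end subdyadicSource

/-- For every positive n there is a source of size n and a prefix code whose
competitive advantage over a Shannon–Fano code (lengths ⌈log₂(1/p)⌉) is at
least 1 − 2^{−n+2}, and whose expected length is at least 1 − 2^{−n+2}
smaller than that of the Shannon–Fano code. -/
theorem exists_advantage_over_shannon_fano (n : ℕ) (hn : 1 ≤ n) :
    ∃ (p : Fin n → ℝ) (c : Fin n → List Bool),
      (∀ i, 0 < p i) ∧ (∑ i, p i = 1) ∧
      (∀ i j, i ≠ j → ¬ (c i <+: c j)) ∧
      (∑ i ∈ Finset.univ.filter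
          (fun i => ((c i).length : ℤ) < ⌈Real.logb 2 (1 / p i)⌉), p i)
        - (∑ i ∈ Finset.univ.filter
          (fun i => ⌈Real.logb 2 (1 / p i)⌉ < ((c i).length : ℤ)), p i)
        ≥ 1 - (2:ℝ) ^ (2 - (n:ℤ)) ∧
      (∑ i, p i * (⌈Real.logb 2 (1 / p i)⌉ : ℝ)) - (∑ i, p i * (c i).length)
        ≥ 1 - (2:ℝ) ^ (2 - (n:ℤ)) := by
  obtain ⟨m, rfl⟩ := Nat.exists_eq_add_of_le' hn
  let p := subdyadicSource m
  have hp : ∀ i, 0 ≤ p i := fun i => (subdyadicSource.pos m i).le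
  have hle := subdyadicSource.length_unaryCode_le m
  have hlt : ∀ i ∈ univ.erase (Fin.last m),
      ((unaryCode m i).length : ℤ) < shannonFanoLength (p i) := by
    intro i hi
    obtain ⟨j, rfl⟩ := Fin.exists_castSucc_eq.2 (ne_of_mem_erase hi)
    exact subdyadicSource.length_unaryCode_castSucc_lt m j
  have hmass : 1 - (2 : ℝ) ^ (2 - ((m + 1 : ℕ) : ℤ)) ≤ ∑ i ∈ univ.erase (Fin.last m), p i := by
    rw [sum_erase_eq_sub (mem_univ _), subdyadicSource.sum_eq_one, Nat.cast_succ,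
      show (2 : ℤ) - (m + 1) = 1 - m by ring, two_zpow_one_sub_natCast]
    exact sub_le_sub_left (subdyadicSource.last_lt m).le 1
  refine ⟨p, fun i => unaryCode m i, subdyadicSource.pos m, subdyadicSource.sum_eq_one m,
    fun i j hij h => hij (Fin.ext (eq_of_unaryCode_prefix (Fin.is_le i) (Fin.is_le j) h)),
    hmass.trans (sum_le_competitive_advantage hp hle hlt),
    hmass.trans (sum_le_expected_length_sub hp hle hlt)⟩
end

section
/- In a Huffman code tree, if y and y' are sibling nodes, z is a leaf descendant of y, and P(z) < P(y) − P(y'), then the Huffman code is not competitively optimal for the source. -/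
/-!
Let `U = Y \ {z}` and `V = Y'`. Then `K(U) = 2^{-d} - 2^{-l(z)} < 2^{-d} = K(V)` while
`P(U) = P(Y) - P(z) > P(V)`. Shorten every codeword of `U` by one bit and lengthen every codeword
of `V` by `k` bits: the Kraft sum grows by `K(U)` and shrinks by `(1 - 2^{-k}) K(V)`, so for large
`k` it stays at most `1`. The new code beats the Huffman code exactly on `U` and loses exactly on
`V`, so its competitive advantage is `P(U) - P(V) > 0`.
-/

open Finset

noncomputable section

variable {ι : Type*}

def kraftSum (l : ι → ℕ) (s : Finset ι) : ℝ := ∑ i ∈ s, ((1:ℝ)/2) ^ l i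

def competitiveAdvantage [Fintype ι] (p : ι → ℝ) (l l' : ι → ℕ) : ℝ :=
  ∑ i ∈ univ.filter (fun i => l i < l' i), p i - ∑ i ∈ univ.filter (fun i => l' i < l i), p i

end

def shortenLengthen {ι : Type*} [DecidableEq ι] (l : ι → ℕ) (U V : Finset ι) (k : ℕ) (i : ι) :
    ℕ :=
  if i ∈ U then l i - 1 else if i ∈ V then l i + k else l i

section

variable {ι : Type*}

lemma kraftSum_mono (l : ι → ℕ) : Monotone (kraftSum l) := fun _ _ h =>
  sum_le_sum_of_subset_of_nonneg h fun _ _ _ => by positivity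

variable [DecidableEq ι] [Fintype ι]

-- This is what makes the truncated `l i - 1` in `shortenLengthen` a genuine shortening.
lemma pos_of_mem_of_kraftSum_lt {l : ι → ℕ} (hl : kraftSum l univ ≤ 1) {U V : Finset ι}
    (hUV : Disjoint U V) (hK : kraftSum l U < kraftSum l V) {i : ι} (hi : i ∈ U) : 0 < l i := by
  by_contra! h
  have hU : ((1:ℝ)/2) ^ l i ≤ kraftSum l U :=
    single_le_sum (f := fun i => ((1:ℝ)/2) ^ l i) (fun _ _ => by positivity) hi
  rw [Nat.le_zero.mp h, pow_zero] at hU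
  have hUV' : kraftSum l U + kraftSum l V ≤ 1 :=
    (sum_union hUV).symm.le.trans ((kraftSum_mono l (subset_univ _)).trans hl)
  linarith

lemma kraftSum_shortenLengthen {l : ι → ℕ} {U V : Finset ι} (hUV : Disjoint U V)
    (hU : ∀ i ∈ U, 0 < l i) (k : ℕ) :
    kraftSum (shortenLengthen l U V k) univ
      = kraftSum l univ + kraftSum l U - (1 - ((1:ℝ)/2) ^ k) * kraftSum l V := by
  have hpt : ∀ i, ((1:ℝ)/2) ^ shortenLengthen l U V k i
      = ((1:ℝ)/2) ^ l i + (if i ∈ U then ((1:ℝ)/2) ^ l i else 0)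
        - (if i ∈ V then (1 - ((1:ℝ)/2) ^ k) * ((1:ℝ)/2) ^ l i else 0) := by
    intro i
    unfold shortenLengthen
    by_cases hiU : i ∈ U
    · obtain ⟨m, hm⟩ := Nat.exists_eq_add_one_of_ne_zero (hU i hiU).ne'
      simp only [hiU, disjoint_left.mp hUV hiU, if_true, if_false, hm, Nat.add_sub_cancel,
        pow_succ]
      ring
    · by_cases hiV : i ∈ V
      · simp only [hiU, hiV, if_true, if_false, pow_add]
        ring
      · simp [hiU, hiV]
  simp only [kraftSum, hpt, sum_sub_distrib, sum_add_distrib, Fintype.sum_ite_mem, mul_sum]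

lemma filter_shortenLengthen_lt {l : ι → ℕ} {U V : Finset ι} (hU : ∀ i ∈ U, 0 < l i) (k : ℕ) :
    univ.filter (fun i => shortenLengthen l U V k i < l i) = U := by
  ext i
  rw [mem_filter_univ, shortenLengthen]
  split_ifs with hiU
  · simpa [hiU] using Nat.sub_one_lt_of_lt (hU i hiU)
  all_goals simp [hiU]

lemma filter_lt_shortenLengthen {l : ι → ℕ} {U V : Finset ι} (hUV : Disjoint U V)
    {k : ℕ} (hk : 0 < k) :
    univ.filter (fun i => l i < shortenLengthen l U V k i) = V := by
  ext i
  rw [mem_filter_univ, shortenLengthen]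
  split_ifs with hiU hiV
  · simp [disjoint_left.mp hUV hiU]
  · simpa [hiV]
  · simp [hiV]

theorem exists_competitiveAdvantage_pos {p : ι → ℝ} {l : ι → ℕ} (hl : kraftSum l univ ≤ 1)
    {U V : Finset ι} (hUV : Disjoint U V) (hK : kraftSum l U < kraftSum l V)
    (hP : ∑ i ∈ V, p i < ∑ i ∈ U, p i) :
    ∃ l' : ι → ℕ, kraftSum l' univ ≤ 1 ∧ 0 < competitiveAdvantage p l' l := by
  have hU := fun i => pos_of_mem_of_kraftSum_lt hl hUV hK (i := i)
  have hV : kraftSum l V ≤ 1 := (kraftSum_mono l (subset_univ V)).trans hl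
  obtain ⟨k, hk⟩ := exists_pow_lt_of_lt_one (sub_pos.mpr hK) (by norm_num : (1:ℝ)/2 < 1)
  refine ⟨shortenLengthen l U V (k + 1), ?_, ?_⟩
  · have hgap : ((1:ℝ)/2) ^ (k + 1) * kraftSum l V ≤ kraftSum l V - kraftSum l U :=
      calc ((1:ℝ)/2) ^ (k + 1) * kraftSum l V
          ≤ ((1:ℝ)/2) ^ (k + 1) := mul_le_of_le_one_right (by positivity) hV
        _ ≤ ((1:ℝ)/2) ^ k := pow_le_pow_of_le_one (by norm_num) (by norm_num) k.le_succ
        _ ≤ kraftSum l V - kraftSum l U := hk.le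
    rw [kraftSum_shortenLengthen hUV hU]
    linarith
  · rw [competitiveAdvantage, filter_shortenLengthen_lt hU,
      filter_lt_shortenLengthen hUV k.succ_pos]
    linarith

end

theorem huffman_not_opt_of_sibling_gap_general
    (n : ℕ) (p : Fin n → ℝ)
    (lH : Fin n → ℕ) (hHkraft : ∑ i, ((1:ℝ)/2) ^ (lH i) = 1)
    (Y Y' : Finset (Fin n)) (hdisj : Disjoint Y Y')
    (d : ℕ)
    (hKY : ∑ x ∈ Y, ((1:ℝ)/2) ^ (lH x) = ((1:ℝ)/2) ^ d)
    (hKY' : ∑ x ∈ Y', ((1:ℝ)/2) ^ (lH x) = ((1:ℝ)/2) ^ d)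
    (z : Fin n) (hz : z ∈ Y)
    (hpz : p z < ∑ x ∈ Y, p x - ∑ x ∈ Y', p x) :
    ∃ lC : Fin n → ℕ, (∑ i, ((1:ℝ)/2) ^ (lC i) ≤ 1) ∧
      0 < (∑ i ∈ Finset.univ.filter (fun i => lC i < lH i), p i)
        - (∑ i ∈ Finset.univ.filter (fun i => lH i < lC i), p i) := by
  have hK : kraftSum lH (Y.erase z) < kraftSum lH Y' := by
    have hz_pos : (0:ℝ) < ((1:ℝ)/2) ^ lH z := by positivity
    rw [kraftSum, kraftSum, sum_erase_eq_sub hz]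
    linarith
  have hP : ∑ i ∈ Y', p i < ∑ i ∈ Y.erase z, p i := by
    rw [sum_erase_eq_sub hz]
    linarith
  exact exists_competitiveAdvantage_pos hHkraft.le
    (disjoint_of_subset_left (erase_subset z Y) hdisj) hK hP

/-- In a Huffman code tree, if Y and Y' are the leaf-descendant sets of two
sibling nodes at depth d (so they are disjoint and both have Kraft sum
2^{−d}), z is a leaf in Y, and P(z) < P(Y) − P(Y'), then the Huffman code is
not competitively optimal: some prefix code has positive competitive
advantage over it. -/
theorem huffman_not_opt_of_sibling_gap
    (n : ℕ) (p : Fin n → ℝ) (hpos : ∀ i, 0 < p i) (hsum : ∑ i, p i = 1)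
    (lH : Fin n → ℕ) (hHkraft : ∑ i, ((1:ℝ)/2) ^ (lH i) = 1)
    (Y Y' : Finset (Fin n)) (hdisj : Disjoint Y Y')
    (d : ℕ) (hd : 1 ≤ d)
    (hKY : ∑ x ∈ Y, ((1:ℝ)/2) ^ (lH x) = ((1:ℝ)/2) ^ d)
    (hKY' : ∑ x ∈ Y', ((1:ℝ)/2) ^ (lH x) = ((1:ℝ)/2) ^ d)
    (z : Fin n) (hz : z ∈ Y)
    (hpz : p z < ∑ x ∈ Y, p x - ∑ x ∈ Y', p x) :
    ∃ lC : Fin n → ℕ, (∑ i, ((1:ℝ)/2) ^ (lC i) ≤ 1) ∧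
      0 < (∑ i ∈ Finset.univ.filter (fun i => lC i < lH i), p i)
        - (∑ i ∈ Finset.univ.filter (fun i => lH i < lC i), p i) :=
  huffman_not_opt_of_sibling_gap_general n p lH hHkraft Y Y' hdisj d hKY hKY' z hz hpz
end
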